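/- For every y_c ∈ (-1,1), SI_1^{C(y_c)} ≤ 1, with equality if and only if y_c = 0; moreover for the maximizing partition (C(0), complement of C(0)) one has SI_2^{C(0)} = 0. -/

import Mathlib

open MeasureTheory ProbabilityTheory Set

/-- The uniform probability measure on the square [-1,1] × [-1,1]. -/
noncomputable def unifSq : Measure (ℝ × ℝ) :=
  (4 : ENNReal)⁻¹ •
    ((volume.restrict (Icc (-1 : ℝ) 1)).prod (volume.restrict (Icc (-1 : ℝ) 1)))

/-- sign(x) = 1 if x ≥ 0 and -1 if x < 0. -/
noncomputable def sgn (x : ℝ) : ℝ := if 0 ≤ x then 1 else -1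

/-- The model output Y = sign(X1)·|X2|. -/
noncomputable def Ymod (ω : ℝ × ℝ) : ℝ := sgn ω.1 * |ω.2|

/-- The membership indicator 1_C(Y). -/
noncomputable def indC (C : Set ℝ) (ω : ℝ × ℝ) : ℝ := C.indicator 1 (Ymod ω)

/-- Region-based first-order Sobol' index of input X (given as a coordinate map)
for the region C : Var(E[1_C(Y) | X]) / Var(1_C(Y)). -/
noncomputable def SIdx (X : ℝ × ℝ → ℝ) (C : Set ℝ) : ℝ :=
  variance (unifSq[indC C | MeasurableSpace.comap X inferInstance]) unifSq /
    variance (indC C) unifSq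

noncomputable def mu1 : Measure ℝ := (2 : ENNReal)⁻¹ • volume.restrict (Icc (-1 : ℝ) 1)

instance : IsProbabilityMeasure mu1 := by
  constructor
  simp [mu1, Real.volume_Icc]
  rw [show ((1:ℝ) + 1) = 2 by norm_num, ENNReal.ofReal_ofNat]
  simp [ENNReal.inv_mul_cancel]

lemma unifSq_eq : mu1.prod mu1 = unifSq := by
  refine Measure.prod_eq fun s t hs ht => ?_
  simp only [unifSq, mu1, Measure.smul_apply, smul_eq_mul, Measure.prod_prod]
  ring_nf
  rw [show ((4:ENNReal))⁻¹ = 2⁻¹ * 2⁻¹ by rw [← ENNReal.mul_inv] <;> norm_num]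
  ring

instance : IsProbabilityMeasure unifSq := by rw [← unifSq_eq]; infer_instance

lemma indep_fst_snd : Indep (MeasurableSpace.comap Prod.fst inferInstance)
    (MeasurableSpace.comap Prod.snd inferInstance) unifSq := by
  rw [Indep_iff]
  rintro t1 t2 ⟨s, hs, rfl⟩ ⟨t, ht, rfl⟩
  rw [← unifSq_eq]
  have h1 : Prod.fst ⁻¹' s ∩ Prod.snd ⁻¹' t = s ×ˢ t := (Set.prod_eq s t).symm
  have h2 : (Prod.fst ⁻¹' s : Set (ℝ×ℝ)) = s ×ˢ univ := (Set.prod_univ).symm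
  have h3 : (Prod.snd ⁻¹' t : Set (ℝ×ℝ)) = univ ×ˢ t := (Set.univ_prod).symm
  rw [h1, h2, h3, Measure.prod_prod, Measure.prod_prod, Measure.prod_prod]
  simp [measure_univ]

lemma map_fst_unifSq : Measure.map Prod.fst unifSq = mu1 := by
  rw [← unifSq_eq]; simp

lemma map_snd_unifSq : Measure.map Prod.snd unifSq = mu1 := by
  rw [← unifSq_eq]; simp

lemma integral_comp_fst (g : ℝ → ℝ) (hg : AEStronglyMeasurable g mu1) :
    ∫ ω, g ω.1 ∂unifSq = ∫ x, g x ∂mu1 := by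
  rw [← map_fst_unifSq,
    integral_map measurable_fst.aemeasurable (by rwa [map_fst_unifSq])]

lemma integral_comp_snd (g : ℝ → ℝ) (hg : AEStronglyMeasurable g mu1) :
    ∫ ω, g ω.2 ∂unifSq = ∫ x, g x ∂mu1 := by
  rw [← map_snd_unifSq,
    integral_map measurable_snd.aemeasurable (by rwa [map_snd_unifSq])]

noncomputable def gstep (a b : ℝ) : ℝ → ℝ := fun x => if x < 0 then a else b

lemma gstep_measurable (a b : ℝ) : Measurable (gstep a b) :=
  Measurable.ite measurableSet_Iio measurable_const measurable_const

lemma mu1_Iio : mu1 (Iio (0:ℝ)) = 2⁻¹ := by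
  have : Iio (0:ℝ) ∩ Icc (-1) 1 = Ico (-1) 0 := by
    ext x; simp only [mem_inter_iff, mem_Iio, mem_Icc, mem_Ico]
    constructor
    · rintro ⟨h1, h2, h3⟩; exact ⟨h2, h1⟩
    · rintro ⟨h1, h2⟩; exact ⟨h2, h1, by linarith⟩
  simp only [mu1, Measure.smul_apply, smul_eq_mul,
    Measure.restrict_apply measurableSet_Iio, this, Real.volume_Ico]
  norm_num

lemma mu1_Ici : mu1 (Ici (0:ℝ)) = 2⁻¹ := by
  have : Ici (0:ℝ) ∩ Icc (-1) 1 = Icc 0 1 := by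
    ext x; simp only [mem_inter_iff, mem_Ici, mem_Icc]
    constructor
    · rintro ⟨h1, h2, h3⟩; exact ⟨h1, h3⟩
    · rintro ⟨h1, h2⟩; exact ⟨h1, by linarith, h2⟩
  simp only [mu1, Measure.smul_apply, smul_eq_mul,
    Measure.restrict_apply measurableSet_Ici, this, Real.volume_Icc]
  norm_num

lemma integral_gstep (a b : ℝ) : ∫ x, gstep a b x ∂mu1 = (a + b) / 2 := by
  have hd : gstep a b = fun x =>
      (Iio (0:ℝ)).indicator (fun _ => a) x + (Ici (0:ℝ)).indicator (fun _ => b) x := by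
    funext x
    by_cases h : x < 0
    · simp [gstep, h, Set.indicator_apply, not_le.2 h]
    · simp [gstep, h, Set.indicator_apply, not_lt.1 h]
  rw [hd, integral_add ((integrable_const a).indicator measurableSet_Iio)
    ((integrable_const b).indicator measurableSet_Ici),
    integral_indicator_const _ measurableSet_Iio,
    integral_indicator_const _ measurableSet_Ici, measureReal_def, measureReal_def, mu1_Iio, mu1_Ici]
  norm_num [ENNReal.toReal_inv]
  ring

lemma variance_congr' {α : Type*} {m : MeasurableSpace α} {μ : Measure α} {f g : α → ℝ}
    (h : f =ᵐ[μ] g) : variance f μ = variance g μ := by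
  have h1 : ∫ x, f x ∂μ = ∫ x, g x ∂μ := integral_congr_ae h
  unfold ProbabilityTheory.variance ProbabilityTheory.evariance
  congr 1
  apply lintegral_congr_ae
  filter_upwards [h] with x hx
  rw [hx, h1]

lemma memℒp2_of_bound {f : ℝ × ℝ → ℝ} (hf : AEStronglyMeasurable f unifSq) (C : ℝ)
    (hC : ∀ ω, |f ω| ≤ C) : MemLp f 2 unifSq :=
  MemLp.of_bound hf C (ae_of_all _ hC)

lemma variance_gstep_fst (a b : ℝ) :
    variance (fun ω : ℝ × ℝ => gstep a b ω.1) unifSq = (a - b)^2 / 4 := by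
  have hmeas : AEStronglyMeasurable (fun ω : ℝ × ℝ => gstep a b ω.1) unifSq :=
    ((gstep_measurable a b).comp measurable_fst).aestronglyMeasurable
  have hmem : MemLp (fun ω : ℝ × ℝ => gstep a b ω.1) 2 unifSq := by
    refine memℒp2_of_bound hmeas (max |a| |b|) fun ω => ?_
    by_cases h : ω.1 < 0 <;> simp [gstep, h, le_max_left, le_max_right]
  rw [variance_eq_sub hmem]
  have hsq : (fun ω : ℝ × ℝ => gstep a b ω.1) ^ 2
      = fun ω : ℝ × ℝ => gstep (a^2) (b^2) ω.1 := by
    funext ω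
    by_cases h : ω.1 < 0 <;> simp [gstep, h, sq]
  rw [hsq, integral_comp_fst _ (gstep_measurable _ _).aestronglyMeasurable,
    integral_comp_fst _ (gstep_measurable _ _).aestronglyMeasurable,
    integral_gstep, integral_gstep]
  ring

lemma integrable_of_bound {f : ℝ × ℝ → ℝ} (hf : Measurable f) (C : ℝ)
    (hC : ∀ ω, |f ω| ≤ C) : Integrable f unifSq :=
  (memℒp2_of_bound hf.aestronglyMeasurable C hC).integrable one_le_two

lemma condexp_mul_fst_snd (φ h : ℝ → ℝ) (hφ : Measurable φ) (hh : Measurable h)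
    (hφb : ∀ x, |φ x| ≤ 1) (hhb : ∀ x, |h x| ≤ 1) :
    unifSq[(fun ω : ℝ × ℝ => φ ω.1 * h ω.2)|MeasurableSpace.comap Prod.fst inferInstance]
      =ᵐ[unifSq] fun ω => φ ω.1 * ∫ y, h y ∂mu1 := by
  set m1 : MeasurableSpace (ℝ × ℝ) := MeasurableSpace.comap Prod.fst inferInstance with hm1def
  have hm1 : m1 ≤ Prod.instMeasurableSpace := measurable_fst.comap_le
  have hfst : @Measurable (ℝ × ℝ) ℝ m1 _ Prod.fst := Measurable.of_comap_le le_rfl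
  have hsnd : @Measurable (ℝ × ℝ) ℝ (MeasurableSpace.comap Prod.snd inferInstance) _ Prod.snd :=
    Measurable.of_comap_le le_rfl
  have hsm : StronglyMeasurable[m1] (fun ω : ℝ × ℝ => φ ω.1) :=
    (hφ.comp hfst).stronglyMeasurable
  have hsm2 : StronglyMeasurable[MeasurableSpace.comap Prod.snd inferInstance]
      (fun ω : ℝ × ℝ => h ω.2) := (hh.comp hsnd).stronglyMeasurable
  have hint_h : Integrable (fun ω : ℝ × ℝ => h ω.2) unifSq :=
    integrable_of_bound (hh.comp measurable_snd) 1 (fun ω => hhb _)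
  have hint_prod : Integrable ((fun ω : ℝ × ℝ => φ ω.1) * fun ω : ℝ × ℝ => h ω.2) unifSq := by
    refine integrable_of_bound ((hφ.comp measurable_fst).mul (hh.comp measurable_snd)) 1 ?_
    intro ω
    calc |φ ω.1 * h ω.2| = |φ ω.1| * |h ω.2| := abs_mul _ _
      _ ≤ 1 * 1 := mul_le_mul (hφb _) (hhb _) (abs_nonneg _) zero_le_one
      _ = 1 := mul_one 1
  have h1 := condExp_mul_of_stronglyMeasurable_left hsm hint_prod hint_h
  have h2 : unifSq[(fun ω : ℝ × ℝ => h ω.2)|m1] =ᵐ[unifSq]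
      fun _ => ∫ ω : ℝ × ℝ, h ω.2 ∂unifSq :=
    condExp_indep_eq measurable_snd.comap_le hm1 hsm2 indep_fst_snd.symm
  have h3 : unifSq[(fun ω : ℝ × ℝ => φ ω.1 * h ω.2)|m1]
      =ᵐ[unifSq] (fun ω : ℝ × ℝ => φ ω.1) * unifSq[(fun ω : ℝ × ℝ => h ω.2)|m1] := h1
  refine h3.trans ?_
  have hint : ∫ ω : ℝ × ℝ, h ω.2 ∂unifSq = ∫ y, h y ∂mu1 :=
    integral_comp_snd h hh.aestronglyMeasurable
  filter_upwards [h2] with ω hω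
  simp only [Pi.mul_apply, hω, hint]

noncomputable def hmf (yc : ℝ) : ℝ → ℝ := fun y => if -|y| ≤ yc then 1 else 0
noncomputable def hpf (yc : ℝ) : ℝ → ℝ := fun y => if |y| ≤ yc then 1 else 0

lemma hmf_measurable (yc : ℝ) : Measurable (hmf yc) :=
  Measurable.ite (measurableSet_le (measurable_abs.neg) measurable_const)
    measurable_const measurable_const

lemma hpf_measurable (yc : ℝ) : Measurable (hpf yc) :=
  Measurable.ite (measurableSet_le measurable_abs measurable_const)
    measurable_const measurable_const

lemma hmf_bound (yc : ℝ) : ∀ x, |hmf yc x| ≤ 1 := by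
  intro x; unfold hmf; split_ifs <;> norm_num

lemma hpf_bound (yc : ℝ) : ∀ x, |hpf yc x| ≤ 1 := by
  intro x; unfold hpf; split_ifs <;> norm_num

lemma gstep_bound (a b : ℝ) (ha : |a| ≤ 1) (hb : |b| ≤ 1) : ∀ x, |gstep a b x| ≤ 1 := by
  intro x; unfold gstep; split_ifs <;> assumption

lemma ae_snd_mem : ∀ᵐ ω : ℝ × ℝ ∂unifSq, ω.2 ∈ Icc (-1 : ℝ) 1 := by
  rw [ae_iff]
  have : {ω : ℝ × ℝ | ¬ ω.2 ∈ Icc (-1:ℝ) 1} = Prod.snd ⁻¹' (Icc (-1:ℝ) 1)ᶜ := rfl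
  rw [this, ← Set.univ_prod, ← unifSq_eq, Measure.prod_prod]
  have : mu1 (Icc (-1:ℝ) 1)ᶜ = 0 := by
    simp only [mu1, Measure.smul_apply, smul_eq_mul,
      Measure.restrict_apply measurableSet_Icc.compl, Set.compl_inter_self]
    simp
  rw [this, mul_zero]

lemma ae_snd_ne : ∀ᵐ ω : ℝ × ℝ ∂unifSq, ω.2 ≠ 0 := by
  rw [ae_iff]
  have : {ω : ℝ × ℝ | ¬ ω.2 ≠ 0} = Prod.snd ⁻¹' {(0:ℝ)} := by
    ext ω; simp
  rw [this, ← Set.univ_prod, ← unifSq_eq, Measure.prod_prod]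
  have : mu1 {(0:ℝ)} = 0 := by
    simp only [mu1, Measure.smul_apply, smul_eq_mul,
      Measure.restrict_apply (measurableSet_singleton _)]
    have h0 : volume ({(0:ℝ)} ∩ Icc (-1:ℝ) 1) = 0 :=
      le_antisymm (le_trans (measure_mono Set.inter_subset_left)
        (le_of_eq Real.volume_singleton)) zero_le
    rw [h0, mul_zero]
  rw [this, mul_zero]

lemma indC_decomp (yc : ℝ) :
    indC (Icc (-1) yc) =ᵐ[unifSq]
      fun ω : ℝ × ℝ => gstep 1 0 ω.1 * hmf yc ω.2 + gstep 0 1 ω.1 * hpf yc ω.2 := by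
  filter_upwards [ae_snd_mem] with ω h2
  have habs : |ω.2| ≤ 1 := abs_le.2 ⟨h2.1, h2.2⟩
  unfold indC Ymod sgn gstep hmf hpf
  rw [Set.indicator_apply]
  by_cases h1 : ω.1 < 0
  · rw [if_neg (not_le.2 h1), if_pos h1, if_pos h1]
    simp only [mem_Icc, Pi.one_apply, neg_one_mul, mul_zero, add_zero, one_mul]
    have hge : (-1:ℝ) ≤ -|ω.2| := by linarith
    by_cases hc : -|ω.2| ≤ yc
    · rw [if_pos ⟨hge, hc⟩, if_pos hc]; ring
    · rw [if_neg (fun h => hc h.2), if_neg hc]; ring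
  · rw [if_pos (not_lt.1 h1), if_neg h1, if_neg h1]
    simp only [mem_Icc, Pi.one_apply, one_mul, zero_mul, zero_add]
    have hge : (-1:ℝ) ≤ |ω.2| := le_trans (by norm_num) (abs_nonneg _)
    by_cases hc : |ω.2| ≤ yc
    · rw [if_pos ⟨hge, hc⟩, if_pos hc]
    · rw [if_neg (fun h => hc h.2), if_neg hc]

lemma integral_hmf_nonneg (yc : ℝ) (h : 0 ≤ yc) : ∫ y, hmf yc y ∂mu1 = 1 := by
  have : hmf yc = fun _ => (1:ℝ) := by
    funext y; unfold hmf
    rw [if_pos (by have := abs_nonneg y; linarith)]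
  rw [this, integral_const]
  simp

lemma integral_hpf_neg (yc : ℝ) (h : yc < 0) : ∫ y, hpf yc y ∂mu1 = 0 := by
  have : hpf yc = fun _ => (0:ℝ) := by
    funext y; unfold hpf
    rw [if_neg (by have := abs_nonneg y; intro hc; linarith)]
  rw [this, integral_zero]

lemma integral_hpf_nonneg (yc : ℝ) (h0 : 0 ≤ yc) (h1 : yc ≤ 1) :
    ∫ y, hpf yc y ∂mu1 = yc := by
  have hset : hpf yc = (Icc (-yc) yc).indicator (fun _ => (1:ℝ)) := by
    funext y; unfold hpf
    rw [Set.indicator_apply]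
    congr 1
    simp [mem_Icc, abs_le, eq_iff_iff, and_comm]
  rw [hset, integral_indicator_const _ measurableSet_Icc]
  have hsub : Icc (-yc) yc ∩ Icc (-1:ℝ) 1 = Icc (-yc) yc := by
    apply Set.inter_eq_self_of_subset_left
    intro x hx
    exact ⟨by linarith [hx.1], by linarith [hx.2]⟩
  have : mu1 (Icc (-yc) yc) = 2⁻¹ * ENNReal.ofReal (2 * yc) := by
    simp only [mu1, Measure.smul_apply, smul_eq_mul,
      Measure.restrict_apply measurableSet_Icc, hsub, Real.volume_Icc]
    congr 1
    ring_nf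
  rw [measureReal_def, this]
  rw [ENNReal.toReal_mul, ENNReal.toReal_ofReal (by linarith), smul_eq_mul]
  simp [ENNReal.toReal_inv]

lemma integral_hmf_neg (yc : ℝ) (hm1 : -1 < yc) (h : yc < 0) :
    ∫ y, hmf yc y ∂mu1 = 1 + yc := by
  have hset : hmf yc = ({y : ℝ | -|y| ≤ yc}).indicator (fun _ => (1:ℝ)) := by
    funext y; unfold hmf
    rw [Set.indicator_apply]
    rfl
  have hms : MeasurableSet {y : ℝ | -|y| ≤ yc} :=
    measurableSet_le measurable_abs.neg measurable_const
  rw [hset, integral_indicator_const _ hms]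
  have hsub : {y : ℝ | -|y| ≤ yc} ∩ Icc (-1:ℝ) 1 = Icc (-1) yc ∪ Icc (-yc) 1 := by
    ext y
    simp only [mem_inter_iff, mem_setOf_eq, mem_Icc, mem_union]
    constructor
    · rintro ⟨hy, hy1, hy2⟩
      rcases le_or_gt y 0 with hy0 | hy0
      · left; constructor; · exact hy1
        rw [abs_of_nonpos hy0] at hy; linarith
      · right; constructor; swap; · exact hy2
        rw [abs_of_pos hy0] at hy; linarith
    · rintro (⟨hy1, hy2⟩ | ⟨hy1, hy2⟩)
      · refine ⟨?_, hy1, by linarith⟩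
        have : y ≤ 0 := le_trans hy2 (le_of_lt h)
        rw [abs_of_nonpos this]; linarith
      · refine ⟨?_, by linarith, hy2⟩
        have : 0 ≤ y := le_trans (by linarith) hy1
        rw [abs_of_nonneg this]; linarith
  have hdisj : Disjoint (Icc (-1:ℝ) yc) (Icc (-yc) 1) := by
    rw [Set.disjoint_left]
    rintro y ⟨_, hy2⟩ ⟨hy3, _⟩
    linarith
  have hvol : mu1 {y : ℝ | -|y| ≤ yc} = 2⁻¹ * ENNReal.ofReal (2 * (1 + yc)) := by
    simp only [mu1, Measure.smul_apply, smul_eq_mul, Measure.restrict_apply hms, hsub]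
    rw [measure_union hdisj measurableSet_Icc, Real.volume_Icc, Real.volume_Icc,
      ← ENNReal.ofReal_add (by linarith) (by linarith)]
    congr 1
    ring
  rw [measureReal_def, hvol, ENNReal.toReal_mul, ENNReal.toReal_ofReal (by linarith), smul_eq_mul]
  simp [ENNReal.toReal_inv]

lemma indC_measurable (yc : ℝ) : Measurable (indC (Icc (-1) yc)) := by
  have hsgn : Measurable sgn := by
    unfold sgn
    exact Measurable.ite (measurableSet_le measurable_const measurable_id)
      measurable_const measurable_const
  have hY : Measurable Ymod := (hsgn.comp measurable_fst).mul (measurable_abs.comp measurable_snd)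
  exact (measurable_const.indicator measurableSet_Icc).comp hY

lemma indC_bound (C : Set ℝ) : ∀ ω, |indC C ω| ≤ 1 := by
  intro ω
  unfold indC
  by_cases h : Ymod ω ∈ C <;> simp [Set.indicator_apply, h]

lemma condexp_fst_eq (yc : ℝ) :
    unifSq[indC (Icc (-1) yc)|MeasurableSpace.comap Prod.fst inferInstance]
      =ᵐ[unifSq] fun ω : ℝ × ℝ =>
        gstep (∫ y, hmf yc y ∂mu1) (∫ y, hpf yc y ∂mu1) ω.1 := by
  have h0 := condExp_congr_ae (m := MeasurableSpace.comap Prod.fst inferInstance)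
    (indC_decomp yc)
  refine h0.trans ?_
  set F1 : ℝ × ℝ → ℝ := fun ω => gstep 1 0 ω.1 * hmf yc ω.2 with hF1
  set F2 : ℝ × ℝ → ℝ := fun ω => gstep 0 1 ω.1 * hpf yc ω.2 with hF2
  have hb1 : ∀ x, |gstep (1:ℝ) 0 x| ≤ 1 := gstep_bound 1 0 (by norm_num) (by norm_num)
  have hb2 : ∀ x, |gstep (0:ℝ) 1 x| ≤ 1 := gstep_bound 0 1 (by norm_num) (by norm_num)
  have hi1 : Integrable F1 unifSq := by
    refine integrable_of_bound (((gstep_measurable 1 0).comp measurable_fst).mul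
      ((hmf_measurable yc).comp measurable_snd)) 1 fun ω => ?_
    rw [abs_mul]
    calc |gstep 1 0 ω.1| * |hmf yc ω.2| ≤ 1 * 1 :=
          mul_le_mul (hb1 _) (hmf_bound yc _) (abs_nonneg _) zero_le_one
      _ = 1 := mul_one 1
  have hi2 : Integrable F2 unifSq := by
    refine integrable_of_bound (((gstep_measurable 0 1).comp measurable_fst).mul
      ((hpf_measurable yc).comp measurable_snd)) 1 fun ω => ?_
    rw [abs_mul]
    calc |gstep 0 1 ω.1| * |hpf yc ω.2| ≤ 1 * 1 :=
          mul_le_mul (hb2 _) (hpf_bound yc _) (abs_nonneg _) zero_le_one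
      _ = 1 := mul_one 1
  have hadd : (fun ω : ℝ × ℝ => gstep 1 0 ω.1 * hmf yc ω.2 + gstep 0 1 ω.1 * hpf yc ω.2)
      = F1 + F2 := rfl
  rw [hadd]
  refine (condExp_add hi1 hi2 _).trans ?_
  have hc1 := condexp_mul_fst_snd (gstep 1 0) (hmf yc) (gstep_measurable 1 0)
    (hmf_measurable yc) hb1 (hmf_bound yc)
  have hc2 := condexp_mul_fst_snd (gstep 0 1) (hpf yc) (gstep_measurable 0 1)
    (hpf_measurable yc) hb2 (hpf_bound yc)
  filter_upwards [hc1, hc2] with ω hω1 hω2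
  have : (unifSq[F1|MeasurableSpace.comap Prod.fst inferInstance] +
      unifSq[F2|MeasurableSpace.comap Prod.fst inferInstance]) ω
      = gstep 1 0 ω.1 * (∫ y, hmf yc y ∂mu1) + gstep 0 1 ω.1 * (∫ y, hpf yc y ∂mu1) := by
    rw [Pi.add_apply, hω1, hω2]
  rw [this]
  unfold gstep
  by_cases h : ω.1 < 0 <;> simp [h]

lemma integrable_indC (yc : ℝ) : Integrable (indC (Icc (-1) yc)) unifSq :=
  integrable_of_bound (indC_measurable yc) 1 (indC_bound _)

lemma integral_indC (yc : ℝ) :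
    ∫ ω, indC (Icc (-1) yc) ω ∂unifSq
      = ((∫ y, hmf yc y ∂mu1) + (∫ y, hpf yc y ∂mu1)) / 2 := by
  have hm1 : (MeasurableSpace.comap Prod.fst inferInstance : MeasurableSpace (ℝ × ℝ))
      ≤ Prod.instMeasurableSpace := measurable_fst.comap_le
  rw [show (∫ ω, indC (Icc (-1) yc) ω ∂unifSq)
      = ∫ ω, (unifSq[indC (Icc (-1) yc)|MeasurableSpace.comap Prod.fst inferInstance]) ω ∂unifSq
      from (integral_condExp hm1).symm,
    integral_congr_ae (condexp_fst_eq yc),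
    integral_comp_fst _ (gstep_measurable _ _).aestronglyMeasurable, integral_gstep]

lemma indC_sq (yc : ℝ) : (indC (Icc (-1) yc)) ^ 2 = indC (Icc (-1) yc) := by
  funext ω
  simp only [Pi.pow_apply]
  unfold indC
  rw [Set.indicator_apply]
  by_cases h : Ymod ω ∈ Icc (-1 : ℝ) yc
  · rw [if_pos h]; norm_num
  · rw [if_neg h]; norm_num

lemma variance_indC (yc : ℝ) :
    variance (indC (Icc (-1) yc)) unifSq
      = (((∫ y, hmf yc y ∂mu1) + (∫ y, hpf yc y ∂mu1)) / 2)
        - (((∫ y, hmf yc y ∂mu1) + (∫ y, hpf yc y ∂mu1)) / 2) ^ 2 := by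
  have hmem : MemLp (indC (Icc (-1) yc)) 2 unifSq :=
    memℒp2_of_bound (indC_measurable yc).aestronglyMeasurable 1 (indC_bound _)
  rw [variance_eq_sub hmem, indC_sq, integral_indC]

lemma variance_condexp_fst (yc : ℝ) :
    variance (unifSq[indC (Icc (-1) yc)|MeasurableSpace.comap Prod.fst inferInstance]) unifSq
      = ((∫ y, hmf yc y ∂mu1) - (∫ y, hpf yc y ∂mu1)) ^ 2 / 4 := by
  rw [variance_congr' (condexp_fst_eq yc), variance_gstep_fst]

lemma variance_const' (c : ℝ) : variance (fun _ : ℝ × ℝ => c) unifSq = 0 := by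
  have hmem : MemLp (fun _ : ℝ × ℝ => c) 2 unifSq := memLp_const c
  rw [variance_eq_sub hmem]
  have : (fun _ : ℝ × ℝ => c) ^ 2 = fun _ : ℝ × ℝ => c ^ 2 := by
    funext ω; simp [sq]
  rw [this, integral_const, integral_const]
  simp only [measureReal_def, measure_univ, ENNReal.toReal_one, one_smul]
  ring

lemma condexp_snd_eq :
    unifSq[indC (Icc (-1) 0)|MeasurableSpace.comap Prod.snd inferInstance]
      =ᵐ[unifSq] fun _ : ℝ × ℝ => ∫ ω : ℝ × ℝ, gstep 1 0 ω.1 ∂unifSq := by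
  have hdec : indC (Icc (-1) 0) =ᵐ[unifSq] fun ω : ℝ × ℝ => gstep 1 0 ω.1 := by
    filter_upwards [ae_snd_mem, ae_snd_ne] with ω h2 hne
    have habs : |ω.2| ≤ 1 := abs_le.2 ⟨h2.1, h2.2⟩
    have habs0 : 0 < |ω.2| := abs_pos.2 hne
    unfold indC Ymod sgn gstep
    rw [Set.indicator_apply]
    by_cases h1 : ω.1 < 0
    · have hmem : (-1:ℝ) * |ω.2| ∈ Icc (-1:ℝ) 0 := by
        rw [mem_Icc]; constructor <;> nlinarith [abs_nonneg ω.2]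
      rw [if_neg (not_le.2 h1), if_pos h1, if_pos hmem]
      simp
    · have hmem : ¬ ((1:ℝ) * |ω.2| ∈ Icc (-1:ℝ) 0) := by
        rw [mem_Icc, one_mul]; intro hc; linarith [hc.2]
      rw [if_pos (not_lt.1 h1), if_neg h1, if_neg hmem]
  have h0 := condExp_congr_ae (m := MeasurableSpace.comap Prod.snd inferInstance) hdec
  refine h0.trans ?_
  have hfst : @Measurable (ℝ × ℝ) ℝ (MeasurableSpace.comap Prod.fst inferInstance) _ Prod.fst :=
    Measurable.of_comap_le le_rfl
  exact condExp_indep_eq measurable_fst.comap_le measurable_snd.comap_le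
    ((gstep_measurable 1 0).comp hfst).stronglyMeasurable indep_fst_snd

theorem stmt6 :
    (∀ yc ∈ Ioo (-1 : ℝ) 1,
      SIdx Prod.fst (Icc (-1 : ℝ) yc) ≤ 1 ∧
      (SIdx Prod.fst (Icc (-1 : ℝ) yc) = 1 ↔ yc = 0)) ∧
    SIdx Prod.snd (Icc (-1 : ℝ) 0) = 0 := by
  constructor
  · intro yc hyc
    obtain ⟨hyc1, hyc2⟩ := hyc
    have hS : SIdx Prod.fst (Icc (-1) yc)
        = (((∫ y, hmf yc y ∂mu1) - (∫ y, hpf yc y ∂mu1)) ^ 2 / 4)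
          / ((((∫ y, hmf yc y ∂mu1) + (∫ y, hpf yc y ∂mu1)) / 2)
            - (((∫ y, hmf yc y ∂mu1) + (∫ y, hpf yc y ∂mu1)) / 2) ^ 2) := by
      unfold SIdx
      rw [variance_condexp_fst, variance_indC]
    rcases le_or_gt 0 yc with h0 | h0
    · rw [integral_hmf_nonneg yc h0, integral_hpf_nonneg yc h0 (le_of_lt hyc2)] at hS
      have hd : (1 + yc) / 2 - ((1 + yc) / 2) ^ 2 = (1 + yc) * (1 - yc) / 4 := by ring
      have hdpos : 0 < (1 + yc) * (1 - yc) / 4 := by nlinarith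
      rw [hd] at hS
      constructor
      · rw [hS, div_le_one hdpos]; nlinarith
      · rw [hS, div_eq_one_iff_eq (ne_of_gt hdpos)]
        constructor
        · intro h; nlinarith
        · intro h; rw [h]; norm_num
    · rw [integral_hmf_neg yc hyc1 h0, integral_hpf_neg yc h0] at hS
      have hd : (1 + yc + 0) / 2 - ((1 + yc + 0) / 2) ^ 2 = (1 + yc) * (1 - yc) / 4 := by ring
      have hdpos : 0 < (1 + yc) * (1 - yc) / 4 := by nlinarith
      rw [hd] at hS
      constructor
      · rw [hS, div_le_one hdpos]; nlinarith
      · rw [hS, div_eq_one_iff_eq (ne_of_gt hdpos)]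
        constructor
        · intro h; exfalso; nlinarith
        · intro h; exact absurd (h ▸ h0) (lt_irrefl 0)
  · have h1 : variance
        (unifSq[indC (Icc (-1) 0)|MeasurableSpace.comap Prod.snd inferInstance]) unifSq = 0 := by
      rw [variance_congr' condexp_snd_eq]
      exact variance_const' _
    unfold SIdx
    rw [h1, zero_div]
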